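/- arXiv:1802.00719 — 4 statements merged into one kernel-verified Lean document; each statement's English description precedes it below -/
import Mathlib

section
/- Let k ≥ 1 be an integer and let p, q be real numbers with cos p ≠ cos q. Then λ_k(p,q) = 4k + 2·(sin p · sin(kp) − sin q · sin(kq))/(cos p − cos q). -/
/-!
Write `p = α - β` and `q = α + β`. The two halves of the sum defining `lamk k p q` are
arithmetic progressions of cosines, with steps `2β` and `2α` (after `cos x = cos (-x)`), so they
telescope once multiplied by `2 sin β` and `2 sin α` respectively. Since
`cos p - cos q = 2 sin α sin β`, multiplying the whole sum by `cos p - cos q` leaves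
`sin q sin (kq) - sin p sin (kp)`.
-/

noncomputable section

open Real

/-- Fourier symbol of the `k`-path Laplacian of the square lattice `ℤ²`. -/
def lamk (k : ℕ) (p q : ℝ) : ℝ :=
  4 * k - 2 * ∑ j ∈ Finset.range k,
    (Real.cos (((k : ℝ) - j) * p + j * q) + Real.cos (((k : ℝ) - j) * q - j * p))

open Finset

theorem two_mul_sin_mul_sum_range_cos {a b : ℝ} (d : ℝ) (k : ℕ) (hb : b = a + 2 * k * d) :
    2 * sin d * ∑ j ∈ range k, cos (a + 2 * j * d) = sin (b - d) - sin (a - d) := by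
  rw [mul_sum, hb]
  convert sum_range_sub (fun j : ℕ => sin (a + 2 * j * d - d)) k using 1
  · refine sum_congr rfl fun j _ => ?_
    rw [sin_sub_sin]
    push_cast
    ring_nf
  · simp

theorem cos_sub_cos_mul_sum_range_cos (k : ℕ) (p q : ℝ) :
    (cos p - cos q) * ∑ j ∈ range k, (cos ((k - j) * p + j * q) + cos ((k - j) * q - j * p))
      = sin q * sin (k * q) - sin p * sin (k * p) := by
  obtain ⟨α, β, rfl, rfl⟩ : ∃ α β, p = α - β ∧ q = α + β :=
    ⟨(p + q) / 2, (q - p) / 2, by ring, by ring⟩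
  have hsplit : ∑ j ∈ range k,
        (cos ((k - j) * (α - β) + j * (α + β)) + cos ((k - j) * (α + β) - j * (α - β)))
      = ∑ j ∈ range k, cos (k * (α - β) + 2 * j * β)
        + ∑ j ∈ range k, cos (-(k * (α + β)) + 2 * j * α) := by
    rw [← sum_add_distrib]
    refine sum_congr rfl fun j _ => ?_
    rw [← cos_neg (-(k * (α + β)) + _)]
    ring_nf
  have hβ := two_mul_sin_mul_sum_range_cos β k
    (show k * (α + β) = k * (α - β) + 2 * k * β by ring)
  have hα := two_mul_sin_mul_sum_range_cos α k
    (show k * (α - β) = -(k * (α + β)) + 2 * k * α by ring)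
  have hcos : cos (α - β) - cos (α + β) = 2 * sin α * sin β := by
    rw [cos_sub, cos_add]; ring
  have hsin : sin α * (sin (k * (α + β) - β) - sin (k * (α - β) - β))
      + sin β * (sin (k * (α - β) - α) - sin (-(k * (α + β)) - α))
      = sin (α + β) * sin (k * (α + β)) - sin (α - β) * sin (k * (α - β)) := by
    simp only [sin_add, sin_sub, sin_neg, cos_neg]
    ring
  rw [hsplit, hcos]
  linear_combination sin α * hβ + sin β * hα + hsin

theorem stmt0_general (k : ℕ) (p q : ℝ) (h : Real.cos p ≠ Real.cos q) :
    lamk k p q = 4 * k +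
      2 * (Real.sin p * Real.sin (k * p) - Real.sin q * Real.sin (k * q)) /
        (Real.cos p - Real.cos q) := by
  have hsum := cos_sub_cos_mul_sum_range_cos k p q
  rw [mul_comm, ← eq_div_iff (sub_ne_zero.mpr h)] at hsum
  rw [lamk, hsum]
  ring

theorem stmt0 (k : ℕ) (hk : 1 ≤ k) (p q : ℝ) (h : Real.cos p ≠ Real.cos q) :
    lamk k p q = 4 * k +
      2 * (Real.sin p * Real.sin (k * p) - Real.sin q * Real.sin (k * q)) /
        (Real.cos p - Real.cos q) :=
  stmt0_general k p q h
end
end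

section
/- Let s > 2 be real and let p, q be real numbers with cos p ≠ cos q. Then Σ_{k=1}^∞ k^{−s} λ_k(p,q) = 4ζ(s−1) + (g_s(p) − g_s(q))/(cos p − cos q). -/
noncomputable section

open Real

/-- The symbol of the Mellin-transformed `k`-path Laplacian. -/
def lamM (s : ℝ) (p q : ℝ) : ℝ := ∑' k : ℕ, lamk (k + 1) p q / ((k : ℝ) + 1) ^ s

/-- `g_s(p) = 2 sin p · Σ_{k≥1} sin(kp)/k^s = 2 sin p · Im(Li_s(e^{ip}))`. -/
def gs (s : ℝ) (p : ℝ) : ℝ :=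
  2 * Real.sin p * ∑' k : ℕ, Real.sin (((k : ℝ) + 1) * p) / ((k : ℝ) + 1) ^ s

/-! The Laplacian symbol has the closed form
`λ_k(p,q) = 4k + 2 (sin p sin kp − sin q sin kq) / (cos p − cos q)`: multiplying the cosine sum
by `2 (cos p − cos q)` and expanding each product into four cosines makes it telescope, because
both families of angles `(k−j)p + jq` and `(k−j)q − jp` are arithmetic progressions in `j`.
Dividing by `k^s` and summing, the `4k` part gives `4 ζ(s−1)` and the rest gives `g_s`. -/

theorem two_mul_cos_sub_cos_mul_sum_cos (p q x : ℝ) (n : ℕ) :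
    2 * (cos p - cos q) * ∑ j ∈ Finset.range n, cos (x + j * (q - p))
      = cos (x + p) - cos (x - q) - cos (x + n * (q - p) + p) + cos (x + n * (q - p) - q) := by
  set f : ℕ → ℝ := fun j => cos (x + j * (q - p) + p) - cos (x + j * (q - p) - q)
  have hstep : ∀ j : ℕ, 2 * (cos p - cos q) * cos (x + j * (q - p)) = f j - f (j + 1) := by
    intro j
    have hp : x + ((j + 1 : ℕ) : ℝ) * (q - p) + p = x + j * (q - p) + q := by push_cast; ring
    have hq : x + ((j + 1 : ℕ) : ℝ) * (q - p) - q = x + j * (q - p) - p := by push_cast; ring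
    dsimp only [f]
    rw [hp, hq]
    generalize x + j * (q - p) = y
    simp only [cos_add, cos_sub]
    ring
  rw [Finset.mul_sum, Finset.sum_congr rfl fun j _ => hstep j, Finset.sum_range_sub']
  simp only [f, Nat.cast_zero, zero_mul, add_zero]
  ring

theorem cos_sub_cos_mul_sum_lamk (p q : ℝ) (k : ℕ) :
    (cos p - cos q) * ∑ j ∈ Finset.range k,
        (cos (((k : ℝ) - j) * p + j * q) + cos (((k : ℝ) - j) * q - j * p))
      = sin q * sin (k * q) - sin p * sin (k * p) := by
  have hprog : ∀ j : ℕ, cos (((k : ℝ) - j) * p + j * q) + cos (((k : ℝ) - j) * q - j * p)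
      = cos (k * p + j * (q - p)) + cos (k * q + j * (-q - p)) :=
    fun j => by ring_nf
  have ha := two_mul_cos_sub_cos_mul_sum_cos p q (k * p) k
  have hb := two_mul_cos_sub_cos_mul_sum_cos p (-q) (k * q) k
  rw [show (k : ℝ) * p + k * (q - p) = k * q by ring] at ha
  rw [show (k : ℝ) * q + k * (-q - p) = -(k * p) by ring, cos_neg] at hb
  simp only [Finset.sum_congr rfl fun j _ => hprog j, Finset.sum_add_distrib]
  generalize ∑ j ∈ Finset.range k, cos (k * p + j * (q - p)) = A at ha ⊢
  generalize ∑ j ∈ Finset.range k, cos (k * q + j * (-q - p)) = B at hb ⊢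
  simp only [cos_add, cos_sub, cos_neg, sin_neg] at ha hb
  linear_combination (ha + hb) / 2

theorem lamk_eq_of_cos_ne {p q : ℝ} (h : cos p ≠ cos q) (k : ℕ) :
    lamk k p q = 4 * k + 2 * (sin p * sin (k * p) - sin q * sin (k * q)) / (cos p - cos q) := by
  have hc : cos p - cos q ≠ 0 := sub_ne_zero.2 h
  rw [lamk, ← sub_eq_iff_eq_add', eq_div_iff hc]
  linear_combination (-2) * cos_sub_cos_mul_sum_lamk p q k

theorem summable_one_div_nat_add_one_rpow {s : ℝ} (hs : 1 < s) :
    Summable fun n : ℕ => 1 / ((n : ℝ) + 1) ^ s := by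
  simpa using (summable_nat_add_iff 1).mpr (Real.summable_one_div_nat_rpow.mpr hs)

theorem summable_sin_div_nat_add_one_rpow (x : ℝ) {s : ℝ} (hs : 1 < s) :
    Summable fun n : ℕ => sin (((n : ℝ) + 1) * x) / ((n : ℝ) + 1) ^ s := by
  refine (summable_one_div_nat_add_one_rpow hs).of_norm_bounded fun n => ?_
  have hpos : (0 : ℝ) < ((n : ℝ) + 1) ^ s := by positivity
  rw [norm_div, Real.norm_eq_abs, Real.norm_eq_abs, abs_of_pos hpos]
  gcongr
  exact abs_sin_le_one _

theorem lamk_succ_div_rpow {p q : ℝ} (h : cos p ≠ cos q) (s : ℝ) (k : ℕ) :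
    lamk (k + 1) p q / ((k : ℝ) + 1) ^ s
      = 4 * (1 / ((k : ℝ) + 1) ^ (s - 1))
        + (2 * sin p * (sin (((k : ℝ) + 1) * p) / ((k : ℝ) + 1) ^ s)
          - 2 * sin q * (sin (((k : ℝ) + 1) * q) / ((k : ℝ) + 1) ^ s)) / (cos p - cos q) := by
  have hk : (0 : ℝ) < k + 1 := by positivity
  have hc : cos p - cos q ≠ 0 := sub_ne_zero.2 h
  rw [lamk_eq_of_cos_ne h, rpow_sub_one hk.ne']
  push_cast
  field_simp

theorem lamM_eq_of_cos_ne {p q s : ℝ} (h : cos p ≠ cos q) (hs : 2 < s) :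
    lamM s p q = 4 * ∑' n : ℕ, 1 / ((n : ℝ) + 1) ^ (s - 1) + (gs s p - gs s q) / (cos p - cos q) := by
  have hZ := (summable_one_div_nat_add_one_rpow (by linarith : 1 < s - 1)).hasSum
  have hP := (summable_sin_div_nat_add_one_rpow p (by linarith : 1 < s)).hasSum
  have hQ := (summable_sin_div_nat_add_one_rpow q (by linarith : 1 < s)).hasSum
  have hsum := (hZ.mul_left 4).add
    (((hP.mul_left (2 * sin p)).sub (hQ.mul_left (2 * sin q))).div_const (cos p - cos q))
  simp only [lamM, gs, lamk_succ_div_rpow h]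
  exact hsum.tsum_eq

theorem riemannZeta_ofReal_eq_tsum {t : ℝ} (ht : 1 < t) :
    riemannZeta t = ((∑' n : ℕ, 1 / ((n : ℝ) + 1) ^ t : ℝ) : ℂ) := by
  rw [zeta_eq_tsum_one_div_nat_add_one_cpow (by simpa using ht), Complex.ofReal_tsum]
  congr 1 with n
  rw [Complex.ofReal_div, Complex.ofReal_cpow (by positivity)]
  norm_cast

theorem stmt4 (s : ℝ) (hs : 2 < s) (p q : ℝ) (h : Real.cos p ≠ Real.cos q) :
    ((lamM s p q : ℝ) : ℂ)
      = 4 * riemannZeta ((s : ℂ) - 1)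
        + (((gs s p - gs s q) / (Real.cos p - Real.cos q) : ℝ) : ℂ) := by
  rw [← Complex.ofReal_one, ← Complex.ofReal_sub, riemannZeta_ofReal_eq_tsum (by linarith),
    lamM_eq_of_cos_ne h hs]
  norm_cast
end
end

section
/- Let s > 2 be real. Then for every (p,q) ∈ [−π,π]² with (p,q) ≠ (0,0), one has λ_M^s(p,q) > 0, where λ_M^s(p,q) := Σ_{k=1}^∞ k^{−s} λ_k(p,q). -/
/-
The series defining `λ_M^s` has nonnegative terms, since each `λ_k` is `4k` minus twice a sum of
`2k` cosines, and it is summable for `s > 2` because `λ_k ≤ 8k`. Hence it dominates its first term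
`λ_1(p, q) = 2 (1 - cos p) + 2 (1 - cos q)`, which is positive on `[-π, π]² \ {(0, 0)}` since
`cos x = 1` forces `x ∈ 2πℤ`.
-/

noncomputable section

open Real

lemma abs_lamk_sub_le (k : ℕ) (p q : ℝ) : |lamk k p q - 4 * k| ≤ 4 * k := by
  have hcos : |∑ j ∈ Finset.range k,
      (Real.cos (((k : ℝ) - j) * p + j * q) + Real.cos (((k : ℝ) - j) * q - j * p))|
      ≤ ∑ _j ∈ Finset.range k, (2 : ℝ) := by
    refine (Finset.abs_sum_le_sum_abs _ _).trans (Finset.sum_le_sum fun j _ => ?_)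
    have h₁ := abs_cos_le_one (((k : ℝ) - j) * p + j * q)
    have h₂ := abs_cos_le_one (((k : ℝ) - j) * q - j * p)
    linarith [abs_add_le (Real.cos (((k : ℝ) - j) * p + j * q))
      (Real.cos (((k : ℝ) - j) * q - j * p))]
  rw [Finset.sum_const, Finset.card_range, nsmul_eq_mul] at hcos
  rw [lamk, sub_sub_cancel_left, abs_neg, abs_mul, abs_two]
  linarith

lemma lamk_nonneg (k : ℕ) (p q : ℝ) : 0 ≤ lamk k p q := by
  linarith [(abs_le.mp (abs_lamk_sub_le k p q)).1]

lemma lamk_le (k : ℕ) (p q : ℝ) : lamk k p q ≤ 8 * k := by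
  linarith [(abs_le.mp (abs_lamk_sub_le k p q)).2]

lemma summable_lamk_div_rpow {s : ℝ} (hs : 2 < s) (p q : ℝ) :
    Summable fun k : ℕ => lamk (k + 1) p q / ((k : ℝ) + 1) ^ s := by
  have hmajorant : Summable fun k : ℕ => 8 * ((k : ℝ) + 1) ^ (1 - s) := by
    have := (summable_nat_add_iff 1).mpr (Real.summable_nat_rpow.mpr (by linarith : 1 - s < -1))
    exact_mod_cast this.mul_left 8
  refine hmajorant.of_nonneg_of_le (fun k => div_nonneg (lamk_nonneg _ p q) (by positivity))
    fun k => ?_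
  have hk : (0 : ℝ) < k + 1 := by positivity
  rw [Real.rpow_sub hk, Real.rpow_one, mul_div_assoc']
  gcongr
  exact_mod_cast lamk_le (k + 1) p q

lemma lamk_one (p q : ℝ) : lamk 1 p q = 2 * (1 - Real.cos p) + 2 * (1 - Real.cos q) := by
  simp only [lamk, Nat.cast_one, mul_one, Finset.range_one, Finset.sum_singleton, CharP.cast_eq_zero,
    sub_zero, one_mul, zero_mul, add_zero]
  ring

lemma cos_lt_one_of_ne_zero {x : ℝ} (h₁ : -(2 * π) < x) (h₂ : x < 2 * π) (hx : x ≠ 0) :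
    Real.cos x < 1 :=
  (cos_le_one x).lt_of_ne ((cos_eq_one_iff_of_lt_of_lt h₁ h₂).not.mpr hx)

lemma lamk_one_pos {p q : ℝ} (hp : p ∈ Set.Icc (-π) π) (hq : q ∈ Set.Icc (-π) π)
    (hpq : (p, q) ≠ (0, 0)) : 0 < lamk 1 p q := by
  have cos_lt_one {x : ℝ} (hx : x ∈ Set.Icc (-π) π) (hx0 : x ≠ 0) : Real.cos x < 1 :=
    cos_lt_one_of_ne_zero (by linarith [hx.1, pi_pos]) (by linarith [hx.2, pi_pos]) hx0
  rw [lamk_one]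
  by_cases hp0 : p = 0
  · have hq0 : q ≠ 0 := fun hq0 => hpq (by rw [hp0, hq0])
    linarith [cos_le_one p, cos_lt_one hq hq0]
  · linarith [cos_le_one q, cos_lt_one hp hp0]

theorem stmt6 (s : ℝ) (hs : 2 < s) :
    ∀ p q : ℝ, p ∈ Set.Icc (-π) π → q ∈ Set.Icc (-π) π → (p, q) ≠ (0, 0) →
      0 < lamM s p q := by
  intro p q hp hq hpq
  exact (summable_lamk_div_rpow hs p q).tsum_pos
    (fun k => div_nonneg (lamk_nonneg _ p q) (by positivity)) 0
    (by simpa using lamk_one_pos hp hq hpq)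
end
end

section
/- Define R(p) := Σ_{k=1}^∞ 2 sin(kp)/k⁶ − 2ζ(5)·p + (ζ(3)/3)·p³ for p ∈ (0,2π). Then R is differentiable on (0,2π) and there exist δ ∈ (0,1) and C > 0 such that for all p ∈ (0,δ): |R(p)| ≤ C·p⁵·log(1/p) and |R'(p)| ≤ C·p⁴·log(1/p). -/
/-!
Subtracting the Taylor polynomials termwise (the linear and cubic terms sum to exactly the
`ζ(5)` and `ζ(3)` terms), `R p = 2 ∑ φ(k p) / k⁶` and `R' p = 2 ∑ ψ(k p) / k⁵` with
`φ x = sin x - (x - x³/6)` and `ψ x = cos x - (1 - x²/2)`. Split both series at `k ≈ 1/p`.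
For `k p ≤ 1` the Taylor bounds `φ x = O(x⁵)`, `ψ x = O(x⁴)` make the `k`-th term `O(p⁵/k)`,
resp. `O(p⁴/k)`, and the harmonic sum up to `1/p` contributes the factor `log (1/p)`. For
`k p > 1` the crude bounds `φ x = O(x³)`, `ψ x = O(x²)` give terms `O(p³/k³)`, resp. `O(p²/k³)`,
whose tail beyond `1/p` is `O(p⁵)`, resp. `O(p⁴)`.
-/

noncomputable section

open Real

/-- The value of the Riemann zeta function (analytically continued) at a real point. -/
def zetaR (x : ℝ) : ℝ := (riemannZeta (x : ℂ)).re

open Finset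

lemma abs_sin_sub_taylor_le_of_le_one {x : ℝ} (hx0 : 0 ≤ x) (hx1 : x ≤ 1) :
    |sin x - (x - x ^ 3 / 6)| ≤ 3 * x ^ 5 := by
  have h := sin_bound (abs_le.mpr ⟨by linarith, hx1⟩)
  rw [abs_of_nonneg hx0] at h
  linarith [pow_nonneg hx0 5]

lemma abs_sin_sub_taylor_le_of_one_le {x : ℝ} (hx : 1 ≤ x) :
    |sin x - (x - x ^ 3 / 6)| ≤ 3 * x ^ 3 := by
  have h_sin := abs_le.mp (abs_sin_le_one x)
  have hx3 : x ≤ x ^ 3 := by nlinarith [mul_le_mul hx hx zero_le_one (by linarith)]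
  rw [abs_le]; constructor <;> nlinarith

lemma abs_cos_sub_taylor_le_of_le_one {x : ℝ} (hx0 : 0 ≤ x) (hx1 : x ≤ 1) :
    |cos x - (1 - x ^ 2 / 2)| ≤ 3 * x ^ 4 := by
  have h := cos_bound (abs_le.mpr ⟨by linarith, hx1⟩)
  rw [abs_of_nonneg hx0] at h
  linarith [pow_nonneg hx0 4]

lemma abs_cos_sub_taylor_le_of_one_le {x : ℝ} (hx : 1 ≤ x) :
    |cos x - (1 - x ^ 2 / 2)| ≤ 3 * x ^ 2 := by
  have h_cos := abs_le.mp (abs_cos_le_one x)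
  rw [abs_le]; constructor <;> nlinarith

lemma one_le_log_one_div {p : ℝ} (hp : 0 < p) (hp3 : p ≤ 1 / 3) : 1 ≤ log (1 / p) := by
  rw [le_log_iff_exp_le (by positivity)]
  linarith [exp_one_lt_d9, (le_div_iff₀ hp).mpr (by linarith : 3 * p ≤ 1)]

lemma sum_range_one_div_le_two_mul_log {p : ℝ} (hp : 0 < p) (hp3 : p ≤ 1 / 3) :
    ∑ k ∈ range ⌊1 / p⌋₊, 1 / ((k : ℝ) + 1) ≤ 2 * log (1 / p) := by
  set N := ⌊1 / p⌋₊
  have hN : (0 : ℝ) < N := by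
    exact_mod_cast Nat.floor_pos.mpr (by rw [le_div_iff₀ hp]; linarith)
  have h_harmonic : ∑ k ∈ range N, 1 / ((k : ℝ) + 1) = harmonic N := by
    simp [harmonic]
  calc ∑ k ∈ range N, 1 / ((k : ℝ) + 1) ≤ 1 + log N := h_harmonic ▸ harmonic_le_one_add_log N
    _ ≤ 1 + log (1 / p) := by gcongr; exact Nat.floor_le (by positivity)
    _ ≤ 2 * log (1 / p) := by linarith [one_le_log_one_div hp hp3]

lemma sum_Ico_one_div_sq_le (N M : ℕ) :
    ∑ k ∈ Ico N M, 1 / ((k : ℝ) + 1) ^ 2 ≤ 2 / ((N : ℝ) + 1) := by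
  calc ∑ k ∈ Ico N M, 1 / ((k : ℝ) + 1) ^ 2 = ∑ i ∈ Ioo N (M + 1), ((i : ℝ) ^ 2)⁻¹ := by
        rw [← Ico_add_one_left_eq_Ioo, ← sum_Ico_add' (fun i : ℕ => ((i : ℝ) ^ 2)⁻¹)]
        simp
    _ ≤ 2 / ((N : ℝ) + 1) := sum_Ioo_inv_sq_le N (M + 1)

lemma sum_range_floor_abs_le_of_head {f : ℕ → ℝ} {p a : ℝ} (hp : 0 < p) (hp3 : p ≤ 1 / 3)
    (ha : 0 ≤ a) (head : ∀ k : ℕ, ((k : ℝ) + 1) * p ≤ 1 → |f k| ≤ a / ((k : ℝ) + 1)) :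
    ∑ k ∈ range ⌊1 / p⌋₊, |f k| ≤ 2 * a * log (1 / p) := by
  calc ∑ k ∈ range ⌊1 / p⌋₊, |f k| ≤ ∑ k ∈ range ⌊1 / p⌋₊, a * (1 / ((k : ℝ) + 1)) := by
        refine sum_le_sum fun k hk => ?_
        have hkN : (k : ℝ) + 1 ≤ 1 / p := by
          exact_mod_cast (Nat.le_floor_iff (by positivity)).mp (mem_range.mp hk)
        rw [mul_one_div]
        exact head k (by rwa [le_div_iff₀ hp] at hkN)
    _ = a * ∑ k ∈ range ⌊1 / p⌋₊, 1 / ((k : ℝ) + 1) := (mul_sum _ _ _).symm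
    _ ≤ a * (2 * log (1 / p)) := by gcongr; exact sum_range_one_div_le_two_mul_log hp hp3
    _ = 2 * a * log (1 / p) := by ring

lemma sum_Ico_floor_abs_le_of_tail {f : ℕ → ℝ} {p b : ℝ} (hp : 0 < p) (hb : 0 ≤ b)
    (tail : ∀ k : ℕ, 1 < ((k : ℝ) + 1) * p → |f k| ≤ b / ((k : ℝ) + 1) ^ 3) (M : ℕ) :
    ∑ k ∈ Ico ⌊1 / p⌋₊ M, |f k| ≤ 2 * b * p ^ 2 := by
  set N := ⌊1 / p⌋₊
  have hNp : 1 < ((N : ℝ) + 1) * p := by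
    rw [← div_lt_iff₀ hp]; exact Nat.lt_floor_add_one _
  calc ∑ k ∈ Ico N M, |f k| ≤ ∑ k ∈ Ico N M, b * p * (1 / ((k : ℝ) + 1) ^ 2) := by
        refine sum_le_sum fun k hk => ?_
        have hk1 : 1 < ((k : ℝ) + 1) * p := by
          have : (N : ℝ) ≤ k := by exact_mod_cast (mem_Ico.mp hk).1
          nlinarith
        refine (tail k hk1).trans ?_
        rw [div_le_iff₀ (by positivity)]
        calc b ≤ b * (((k : ℝ) + 1) * p) := le_mul_of_one_le_right hb hk1.le
          _ = _ := by field_simp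
    _ = b * p * ∑ k ∈ Ico N M, 1 / ((k : ℝ) + 1) ^ 2 := (mul_sum _ _ _).symm
    _ ≤ b * p * (2 / ((N : ℝ) + 1)) := by gcongr; exact sum_Ico_one_div_sq_le N M
    _ ≤ 2 * b * p ^ 2 := by
        rw [mul_div_assoc', div_le_iff₀ (by positivity)]
        nlinarith [mul_le_mul_of_nonneg_left hNp.le (by positivity : 0 ≤ 2 * b * p)]

lemma abs_tsum_le_of_head_tail {f : ℕ → ℝ} {p a b : ℝ} (hp : 0 < p) (hp3 : p ≤ 1 / 3)
    (ha : 0 ≤ a) (hb : 0 ≤ b)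
    (head : ∀ k : ℕ, ((k : ℝ) + 1) * p ≤ 1 → |f k| ≤ a / ((k : ℝ) + 1))
    (tail : ∀ k : ℕ, 1 < ((k : ℝ) + 1) * p → |f k| ≤ b / ((k : ℝ) + 1) ^ 3) :
    |∑' k, f k| ≤ 2 * (a + b * p ^ 2) * log (1 / p) := by
  set N := ⌊1 / p⌋₊
  have h_partial (n : ℕ) : ∑ k ∈ range n, |f k| ≤ 2 * (a + b * p ^ 2) * log (1 / p) := by
    have h_log := one_le_log_one_div hp hp3
    calc ∑ k ∈ range n, |f k| ≤ ∑ k ∈ range (max n N), |f k| :=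
          sum_le_sum_of_subset_of_nonneg (range_subset_range.mpr (le_max_left _ _))
            fun _ _ _ => abs_nonneg _
      _ = ∑ k ∈ range N, |f k| + ∑ k ∈ Ico N (max n N), |f k| :=
          (sum_range_add_sum_Ico _ (le_max_right _ _)).symm
      _ ≤ 2 * a * log (1 / p) + 2 * b * p ^ 2 :=
          add_le_add (sum_range_floor_abs_le_of_head hp hp3 ha head)
            (sum_Ico_floor_abs_le_of_tail hp hb tail _)
      _ ≤ 2 * (a + b * p ^ 2) * log (1 / p) := by nlinarith [mul_nonneg hb (sq_nonneg p)]
  have h_summable : Summable fun k => ‖f k‖ :=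
    summable_of_sum_range_le (fun _ => abs_nonneg _) h_partial
  calc |∑' k, f k| ≤ ∑' k, |f k| := norm_tsum_le_tsum_norm h_summable
    _ ≤ 2 * (a + b * p ^ 2) * log (1 / p) :=
        Real.tsum_le_of_sum_range_le (fun _ => abs_nonneg _) h_partial

lemma abs_tsum_dilate_div_pow_le {φ : ℝ → ℝ} {A p : ℝ} (m : ℕ) (hA : 0 ≤ A)
    (h_small : ∀ x, 0 ≤ x → x ≤ 1 → |φ x| ≤ A * x ^ (m + 2))
    (h_large : ∀ x, 1 ≤ x → |φ x| ≤ A * x ^ m) (hp : 0 < p) (hp3 : p ≤ 1 / 3) :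
    |∑' k : ℕ, φ (((k : ℝ) + 1) * p) / ((k : ℝ) + 1) ^ (m + 3)|
      ≤ 4 * A * p ^ (m + 2) * log (1 / p) := by
  refine (abs_tsum_le_of_head_tail (a := A * p ^ (m + 2)) (b := A * p ^ m) hp hp3
    (by positivity) (by positivity) (fun k hk => ?_) (fun k hk => ?_)).trans_eq (by ring)
  all_goals rw [abs_div, abs_of_pos (by positivity : (0 : ℝ) < ((k : ℝ) + 1) ^ (m + 3))]
  · calc |φ (((k : ℝ) + 1) * p)| / ((k : ℝ) + 1) ^ (m + 3)
        ≤ A * (((k : ℝ) + 1) * p) ^ (m + 2) / ((k : ℝ) + 1) ^ (m + 3) := by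
          gcongr; exact h_small _ (by positivity) hk
      _ = A * p ^ (m + 2) / ((k : ℝ) + 1) := by rw [mul_pow]; field_simp; ring
  · calc |φ (((k : ℝ) + 1) * p)| / ((k : ℝ) + 1) ^ (m + 3)
        ≤ A * (((k : ℝ) + 1) * p) ^ m / ((k : ℝ) + 1) ^ (m + 3) := by
          gcongr; exact h_large _ hk.le
      _ = A * p ^ m / ((k : ℝ) + 1) ^ 3 := by rw [mul_pow]; field_simp; ring

lemma hasSum_one_div_nat_add_one_pow_zetaR {m : ℕ} (hm : 1 < m) :
    HasSum (fun k : ℕ => 1 / ((k : ℝ) + 1) ^ m) (zetaR m) := by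
  have hs : Summable (fun k : ℕ => 1 / ((k : ℝ) + 1) ^ m) := by
    simpa using (summable_nat_add_iff 1).mpr (Real.summable_one_div_nat_pow.mpr hm)
  convert hs.hasSum
  rw [zetaR, zeta_eq_tsum_one_div_nat_add_one_cpow (by simpa using hm), Complex.ofReal_natCast]
  simp_rw [Complex.cpow_natCast]
  have h_ofReal :
      ∑' k : ℕ, 1 / ((k : ℂ) + 1) ^ m = ((∑' k : ℕ, 1 / ((k : ℝ) + 1) ^ m : ℝ) : ℂ) := by
    rw [Complex.ofReal_tsum]; push_cast; rfl
  rw [h_ofReal, Complex.ofReal_re]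

lemma abs_mul_div_nat_add_one_pow_le {c t : ℝ} (ht : |t| ≤ 1) (k s : ℕ) :
    |c * t / ((k : ℝ) + 1) ^ s| ≤ |c| * (1 / ((k : ℝ) + 1) ^ s) := by
  rw [abs_div, abs_mul, abs_of_pos (by positivity : (0 : ℝ) < ((k : ℝ) + 1) ^ s), mul_one_div]
  gcongr
  exact mul_le_of_le_one_right (abs_nonneg c) ht

lemma summable_mul_div_nat_add_one_pow {g : ℕ → ℝ} (c : ℝ) {s : ℕ} (hs : 1 < s)
    (hg : ∀ k, |g k| ≤ 1) : Summable fun k : ℕ => c * g k / ((k : ℝ) + 1) ^ s :=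
  .of_norm_bounded ((hasSum_one_div_nat_add_one_pow_zetaR hs).summable.mul_left |c|)
    fun k => abs_mul_div_nat_add_one_pow_le (hg k) k s

lemma hasDerivAt_tsum_mul_sin_div_pow (c : ℝ) {s : ℕ} (hs : 1 < s) (p : ℝ) :
    HasDerivAt (fun z => ∑' k : ℕ, c * sin (((k : ℝ) + 1) * z) / ((k : ℝ) + 1) ^ (s + 1))
      (∑' k : ℕ, c * cos (((k : ℝ) + 1) * p) / ((k : ℝ) + 1) ^ s) p := by
  refine hasDerivAt_tsum
    (g := fun (k : ℕ) z => c * sin (((k : ℝ) + 1) * z) / ((k : ℝ) + 1) ^ (s + 1))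
    (g' := fun (k : ℕ) z => c * cos (((k : ℝ) + 1) * z) / ((k : ℝ) + 1) ^ s) (y₀ := p)
    ((hasSum_one_div_nat_add_one_pow_zetaR hs).summable.mul_left |c|)
    (fun k z => ?_) (fun k z => abs_mul_div_nat_add_one_pow_le (abs_cos_le_one _) k s)
    (summable_mul_div_nat_add_one_pow c (by omega) fun k => abs_sin_le_one (((k : ℝ) + 1) * p)) p
  have h := (((hasDerivAt_id z).const_mul ((k : ℝ) + 1)).sin.const_mul c).div_const
    (((k : ℝ) + 1) ^ (s + 1))
  refine h.congr_deriv ?_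
  simp only [id, mul_one]
  field_simp
  ring

lemma tsum_sin_sub_zetaR_eq (p : ℝ) :
    (∑' k : ℕ, 2 * sin (((k : ℝ) + 1) * p) / ((k : ℝ) + 1) ^ 6) - 2 * zetaR 5 * p
        + zetaR 3 / 3 * p ^ 3
      = 2 * ∑' k : ℕ,
          (sin (((k : ℝ) + 1) * p) - (((k : ℝ) + 1) * p - (((k : ℝ) + 1) * p) ^ 3 / 6))
            / ((k : ℝ) + 1) ^ 6 := by
  have h := ((summable_mul_div_nat_add_one_pow 2 (s := 6) (by norm_num)
    fun k => abs_sin_le_one (((k : ℝ) + 1) * p)).hasSum.sub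
      ((hasSum_one_div_nat_add_one_pow_zetaR (m := 5) (by norm_num)).mul_left (2 * p))).add
      ((hasSum_one_div_nat_add_one_pow_zetaR (m := 3) (by norm_num)).mul_left (p ^ 3 / 3))
  push_cast at h
  convert h.tsum_eq.symm using 1
  · ring
  · rw [← tsum_mul_left]
    exact tsum_congr fun k => by field_simp; ring

lemma tsum_cos_sub_zetaR_eq (p : ℝ) :
    (∑' k : ℕ, 2 * cos (((k : ℝ) + 1) * p) / ((k : ℝ) + 1) ^ 5) - 2 * zetaR 5 + zetaR 3 * p ^ 2
      = 2 * ∑' k : ℕ, (cos (((k : ℝ) + 1) * p) - (1 - (((k : ℝ) + 1) * p) ^ 2 / 2))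
          / ((k : ℝ) + 1) ^ 5 := by
  have h := ((summable_mul_div_nat_add_one_pow 2 (s := 5) (by norm_num)
    fun k => abs_cos_le_one (((k : ℝ) + 1) * p)).hasSum.sub
      ((hasSum_one_div_nat_add_one_pow_zetaR (m := 5) (by norm_num)).mul_left 2)).add
      ((hasSum_one_div_nat_add_one_pow_zetaR (m := 3) (by norm_num)).mul_left (p ^ 2))
  push_cast at h
  convert h.tsum_eq.symm using 1
  · ring
  · rw [← tsum_mul_left]
    exact tsum_congr fun k => by field_simp; ring

theorem stmt11 :
    let R : ℝ → ℝ := fun p =>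
      (∑' k : ℕ, 2 * Real.sin (((k : ℝ) + 1) * p) / ((k : ℝ) + 1) ^ 6)
        - 2 * zetaR 5 * p + zetaR 3 / 3 * p ^ 3
    (∀ p ∈ Set.Ioo (0 : ℝ) (2 * π), DifferentiableAt ℝ R p) ∧
    ∃ δ ∈ Set.Ioo (0 : ℝ) 1, ∃ C > (0 : ℝ), ∀ p ∈ Set.Ioo (0 : ℝ) δ,
      |R p| ≤ C * p ^ 5 * Real.log (1 / p) ∧ |deriv R p| ≤ C * p ^ 4 * Real.log (1 / p) := by
  intro R
  have hR (p : ℝ) : HasDerivAt R ((∑' k : ℕ, 2 * cos (((k : ℝ) + 1) * p) / ((k : ℝ) + 1) ^ 5)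
      - 2 * zetaR 5 + zetaR 3 * p ^ 2) p := by
    have h := ((hasDerivAt_tsum_mul_sin_div_pow 2 (s := 5) (by norm_num) p).sub
      ((hasDerivAt_id p).const_mul (2 * zetaR 5))).add
      ((hasDerivAt_pow 3 p).const_mul (zetaR 3 / 3))
    exact h.congr_deriv (by push_cast; ring)
  refine ⟨fun p _ => (hR p).differentiableAt, 1 / 3, by norm_num, 24, by norm_num,
    fun p ⟨hp, hp3⟩ => ⟨?_, ?_⟩⟩
  · have h := abs_tsum_dilate_div_pow_le 3 (φ := fun x => sin x - (x - x ^ 3 / 6)) (A := 3)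
      (by norm_num) (fun _ => abs_sin_sub_taylor_le_of_le_one)
      (fun _ => abs_sin_sub_taylor_le_of_one_le) hp hp3.le
    dsimp only [R]
    rw [tsum_sin_sub_zetaR_eq, abs_mul, abs_two]
    linarith
  · have h := abs_tsum_dilate_div_pow_le 2 (φ := fun x => cos x - (1 - x ^ 2 / 2)) (A := 3)
      (by norm_num) (fun _ => abs_cos_sub_taylor_le_of_le_one)
      (fun _ => abs_cos_sub_taylor_le_of_one_le) hp hp3.le
    rw [(hR p).deriv, tsum_cos_sub_zetaR_eq, abs_mul, abs_two]
    linarith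
end
end
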